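/- arXiv:0903.0561 — 11 statements merged into one kernel-verified Lean document; each statement's English description precedes it below -/
import Mathlib

section
/- Let α > 0 and C ≥ 0. Let f : [0,∞) → [0,∞) be measurable with f(λ) ≤ C·λ^α for all λ ≥ 0, and let g : [0,∞) → [0,∞) be a function such that for every t > 0 and every λ ≥ 0 one has g(λ) ≤ t·e^t·∫_0^∞ f(μ·λ)·e^{-μ·t} dμ. Then for all λ ≥ 0 one has g(λ) ≤ C·(e/α)^α·Γ(α+1)·λ^α. -/
open MeasureTheory Real Set

/-! Bounding `f (μ λ) ≤ C μ^α λ^α` under the integral turns the right-hand side of the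
hypothesis on `g` into a Gamma integral, `t e^t ∫₀^∞ μ^α e^{-μ t} dμ = Γ(α+1) e^t / t^α`;
the choice `t = α` minimises `e^t / t^α` and gives the factor `(e/α)^α`. -/

theorem integral_rpow_mul_exp_neg_mul_Ioi_of_neg_one_lt {s t : ℝ} (hs : -1 < s) (ht : 0 < t) :
    ∫ μ in Ioi (0 : ℝ), μ ^ s * exp (-μ * t) = (1 / t) ^ (s + 1) * Gamma (s + 1) := by
  simpa [mul_comm t] using integral_rpow_mul_exp_neg_mul_Ioi (a := s + 1) (by linarith) ht

theorem integrableOn_rpow_mul_exp_neg_mul_Ioi {s t : ℝ} (hs : -1 < s) (ht : 0 < t) :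
    IntegrableOn (fun μ : ℝ => μ ^ s * exp (-μ * t)) (Ioi 0) :=
  .of_integral_ne_zero <| by
    rw [integral_rpow_mul_exp_neg_mul_Ioi_of_neg_one_lt hs ht]
    exact (mul_pos (by positivity) (Gamma_pos_of_pos (by linarith))).ne'

theorem setIntegral_comp_mul_mul_exp_le_of_le_rpow {f : ℝ → ℝ} {α C t lam : ℝ}
    (hα : -1 < α) (ht : 0 < t) (hlam : 0 ≤ lam)
    (hf_nonneg : ∀ x, 0 ≤ x → 0 ≤ f x) (hf : ∀ x, 0 ≤ x → f x ≤ C * x ^ α) :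
    ∫ μ in Ioi (0 : ℝ), f (μ * lam) * exp (-μ * t)
      ≤ C * lam ^ α * ((1 / t) ^ (α + 1) * Gamma (α + 1)) := by
  rw [← integral_rpow_mul_exp_neg_mul_Ioi_of_neg_one_lt hα ht, ← integral_const_mul]
  refine integral_mono_of_nonneg ((ae_restrict_iff' measurableSet_Ioi).2 <| ae_of_all _
      fun μ hμ => mul_nonneg (hf_nonneg _ (mul_nonneg (le_of_lt hμ) hlam)) (exp_pos _).le)
    ((integrableOn_rpow_mul_exp_neg_mul_Ioi hα ht).const_mul _)
    ((ae_restrict_iff' measurableSet_Ioi).2 <| ae_of_all _ fun μ hμ => ?_)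
  have hμ : 0 ≤ μ := le_of_lt hμ
  calc f (μ * lam) * exp (-μ * t) ≤ C * (μ * lam) ^ α * exp (-μ * t) :=
        mul_le_mul_of_nonneg_right (hf _ (mul_nonneg hμ hlam)) (exp_pos _).le
    _ = C * lam ^ α * (μ ^ α * exp (-μ * t)) := by rw [mul_rpow hμ hlam]; ring

theorem mul_exp_mul_one_div_rpow_add_one {α : ℝ} (hα : 0 < α) :
    α * exp α * (1 / α) ^ (α + 1) = (exp 1 / α) ^ α := by
  rw [rpow_add (by positivity), rpow_one, div_rpow (exp_pos 1).le hα.le,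
    div_rpow zero_le_one hα.le, one_rpow, exp_one_rpow]
  field_simp

theorem stmt_0_general (α C : ℝ) (hα : 0 < α)
    (f g : ℝ → ℝ)
    (hf_nonneg : ∀ x : ℝ, 0 ≤ x → 0 ≤ f x)
    (hf : ∀ lam : ℝ, 0 ≤ lam → f lam ≤ C * lam ^ α)
    (hg : ∀ t : ℝ, 0 < t → ∀ lam : ℝ, 0 ≤ lam →
      g lam ≤ t * Real.exp t * ∫ μ in Set.Ioi (0:ℝ), f (μ * lam) * Real.exp (-μ * t)) :
    ∀ lam : ℝ, 0 ≤ lam →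
      g lam ≤ C * (Real.exp 1 / α) ^ α * Real.Gamma (α + 1) * lam ^ α := by
  intro lam hlam
  calc g lam ≤ α * exp α * ∫ μ in Ioi (0 : ℝ), f (μ * lam) * exp (-μ * α) := hg α hα lam hlam
    _ ≤ α * exp α * (C * lam ^ α * ((1 / α) ^ (α + 1) * Gamma (α + 1))) := by
        gcongr
        exact setIntegral_comp_mul_mul_exp_le_of_le_rpow (by linarith) hα hlam hf_nonneg hf
    _ = C * (exp 1 / α) ^ α * Gamma (α + 1) * lam ^ α := by
        rw [← mul_exp_mul_one_div_rpow_add_one hα]; ring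

/-- If `f(λ) ≤ C λ^α` on `[0,∞)` and `g(λ) ≤ t e^t ∫_0^∞ f(μλ) e^{-μt} dμ`
for all `t > 0`, then `g(λ) ≤ C (e/α)^α Γ(α+1) λ^α`. -/
theorem stmt_0 (α C : ℝ) (hα : 0 < α) (hC : 0 ≤ C)
    (f g : ℝ → ℝ) (hf_meas : Measurable f)
    (hf_nonneg : ∀ x : ℝ, 0 ≤ x → 0 ≤ f x)
    (hg_nonneg : ∀ x : ℝ, 0 ≤ x → 0 ≤ g x)
    (hf : ∀ lam : ℝ, 0 ≤ lam → f lam ≤ C * lam ^ α)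
    (hg : ∀ t : ℝ, 0 < t → ∀ lam : ℝ, 0 ≤ lam →
      g lam ≤ t * Real.exp t * ∫ μ in Set.Ioi (0:ℝ), f (μ * lam) * Real.exp (-μ * t)) :
    ∀ lam : ℝ, 0 ≤ lam →
      g lam ≤ C * (Real.exp 1 / α) ^ α * Real.Gamma (α + 1) * lam ^ α :=
  stmt_0_general α C hα f g hf_nonneg hf hg
end

section
/- Let φ : [0,∞) → [0,∞) be nondecreasing and measurable, and assume its Laplace transform φ̂(s) := ∫_0^∞ e^{-s·μ}·φ(μ) dμ is finite for every s > 0. Let g : (0,∞) → [0,∞) satisfy, for every t > 0 and λ > 0, g(λ) ≤ t·e^t·∫_0^∞ φ(μ·λ)·e^{-μ·t} dμ. Then for every t > 0 and λ > 0 one has g(λ) ≤ (t·e^t/λ)·φ̂(t/λ). Moreover, if there is a constant C_φ ≥ 0 such that φ̂(s) ≤ C_φ·s^{-1}·φ(s^{-1}) for all s > 0, then g(λ) ≤ e·C_φ·φ(λ) for all λ > 0. -/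
open MeasureTheory Real Set

/-! Substituting `μ ↦ μ / λ` in the averaging integral turns `∫₀^∞ φ(μλ) e^{-μt} dμ` into
`λ⁻¹ φ̂(t/λ)`, which is the first bound. Taking `t = 1` and inserting the assumed bound on
`φ̂(1/λ)` gives the second. -/

noncomputable def laplaceIoi (φ : ℝ → ℝ) (s : ℝ) : ℝ :=
  ∫ μ in Ioi (0 : ℝ), exp (-s * μ) * φ μ

theorem setIntegral_Ioi_comp_mul_mul_exp (φ : ℝ → ℝ) (t : ℝ) {lam : ℝ} (hlam : 0 < lam) :
    ∫ μ in Ioi (0 : ℝ), φ (μ * lam) * exp (-μ * t) = lam⁻¹ * laplaceIoi φ (t / lam) := by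
  have hsubst := integral_comp_mul_right_Ioi (fun x => exp (-(t / lam) * x) * φ x) 0 hlam
  rw [zero_mul, smul_eq_mul] at hsubst
  rw [laplaceIoi, ← hsubst]
  refine setIntegral_congr_fun measurableSet_Ioi fun μ _ => ?_
  have hexp : -(t / lam) * (μ * lam) = -μ * t := by field_simp
  rw [hexp, mul_comm]

theorem stmt_1_general (φ g : ℝ → ℝ)
    (hg : ∀ t : ℝ, 0 < t → ∀ lam : ℝ, 0 < lam →
      g lam ≤ t * Real.exp t * ∫ μ in Set.Ioi (0:ℝ), φ (μ * lam) * Real.exp (-μ * t)) :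
    (∀ t : ℝ, 0 < t → ∀ lam : ℝ, 0 < lam →
      g lam ≤ (t * Real.exp t / lam) *
        ∫ μ in Set.Ioi (0:ℝ), Real.exp (-(t / lam) * μ) * φ μ) ∧
    (∀ Cφ : ℝ, 0 ≤ Cφ →
      (∀ s : ℝ, 0 < s →
        (∫ μ in Set.Ioi (0:ℝ), Real.exp (-s * μ) * φ μ) ≤ Cφ * s⁻¹ * φ s⁻¹) →
      ∀ lam : ℝ, 0 < lam → g lam ≤ Real.exp 1 * Cφ * φ lam) := by
  have hlaplace : ∀ t : ℝ, 0 < t → ∀ lam : ℝ, 0 < lam →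
      g lam ≤ t * exp t / lam * laplaceIoi φ (t / lam) := fun t ht lam hlam => by
    have h := hg t ht lam hlam
    rwa [setIntegral_Ioi_comp_mul_mul_exp φ t hlam, ← mul_assoc, ← div_eq_mul_inv] at h
  refine ⟨hlaplace, fun Cφ _ hhat lam hlam => ?_⟩
  calc g lam ≤ exp 1 / lam * laplaceIoi φ lam⁻¹ := by
        simpa only [one_mul, one_div] using hlaplace 1 one_pos lam hlam
    _ ≤ exp 1 / lam * (Cφ * lam⁻¹⁻¹ * φ lam⁻¹⁻¹) := by
        gcongr
        exact hhat _ (inv_pos.2 hlam)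
    _ = exp 1 * Cφ * φ lam := by
        rw [inv_inv]
        field_simp

/-- If `φ` is nondecreasing with finite Laplace transform
`φ̂(s) = ∫_0^∞ e^{-sμ} φ(μ) dμ`, and `g(λ) ≤ t e^t ∫_0^∞ φ(μλ) e^{-μt} dμ` for all `t, λ > 0`,
then `g(λ) ≤ (t e^t / λ) φ̂(t/λ)`; and if moreover `φ̂(s) ≤ C_φ s⁻¹ φ(s⁻¹)` for all `s > 0`,
then `g(λ) ≤ e C_φ φ(λ)`. -/
theorem stmt_1 (φ g : ℝ → ℝ)
    (hφ_nonneg : ∀ x : ℝ, 0 ≤ x → 0 ≤ φ x)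
    (hφ_mono : MonotoneOn φ (Set.Ici 0))
    (hφ_meas : Measurable φ)
    (hφ_int : ∀ s : ℝ, 0 < s →
      IntegrableOn (fun μ => Real.exp (-s * μ) * φ μ) (Set.Ioi (0:ℝ)))
    (hg_nonneg : ∀ lam : ℝ, 0 < lam → 0 ≤ g lam)
    (hg : ∀ t : ℝ, 0 < t → ∀ lam : ℝ, 0 < lam →
      g lam ≤ t * Real.exp t * ∫ μ in Set.Ioi (0:ℝ), φ (μ * lam) * Real.exp (-μ * t)) :
    (∀ t : ℝ, 0 < t → ∀ lam : ℝ, 0 < lam →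
      g lam ≤ (t * Real.exp t / lam) *
        ∫ μ in Set.Ioi (0:ℝ), Real.exp (-(t / lam) * μ) * φ μ) ∧
    (∀ Cφ : ℝ, 0 ≤ Cφ →
      (∀ s : ℝ, 0 < s →
        (∫ μ in Set.Ioi (0:ℝ), Real.exp (-s * μ) * φ μ) ≤ Cφ * s⁻¹ * φ s⁻¹) →
      ∀ lam : ℝ, 0 < lam → g lam ≤ Real.exp 1 * Cφ * φ lam) :=
  stmt_1_general φ g hg
end

section
/- Let ι be a countable index set, let E, F : ι → ℝ be families of nonnegative real numbers, and let γ, α, C be real numbers with 0 < γ ≤ α and C > 0. Assume: (i) for every t > 0, ∑'_{j∈ι} exp(-t·F_j) ≤ ∑'_{j∈ι} exp(-t·E_j) (sums taken in [0,∞]); and (ii) for every λ ≥ 0, ∑'_{j∈ι} ((λ - E_j)_+)^γ ≤ C·λ^α. Then for every λ > 0, ∑'_{j∈ι} ((λ - F_j)_+)^γ ≤ C·(γ/e)^γ·(e/α)^α·(Γ(α+1)/Γ(γ+1))·λ^α. -/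
/-!
Since `v ^ γ * exp (-v)` is maximal at `v = γ`, we have
`(λ - x)₊ ^ γ ≤ (γ / (e t)) ^ γ * exp (t λ) * exp (-t x)` for every `t > 0`, so the Riesz mean
of `F` is controlled by its heat trace at time `t`, hence by that of `E`. Conversely the heat
trace of `E` is a Laplace transform of its Riesz mean:
`Γ(γ + 1) t^{-γ-1} ∑ exp (-t E_j) = ∫₀^∞ ∑ (μ - E_j)₊ ^ γ exp (-t μ) dμ ≤ C Γ(α + 1) t^{-α-1}`.
Chaining the two and choosing `t = α / λ` gives the bound.
-/

open Real MeasureTheory Set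

lemma rpow_le_div_exp_one_rpow_mul_exp {γ v : ℝ} (hγ : 0 < γ) (hv : 0 ≤ v) :
    v ^ γ ≤ (γ / exp 1) ^ γ * exp v := by
  rcases hv.eq_or_lt with rfl | hv
  · rw [zero_rpow hγ.ne']
    positivity
  have hlog : log v - log γ ≤ v / γ - 1 := by
    rw [← log_div hv.ne' hγ.ne']
    exact log_le_sub_one_of_pos (by positivity)
  have hexponent : log v * γ ≤ log (γ / exp 1) * γ + v := by
    rw [log_div hγ.ne' (exp_pos 1).ne', log_exp]
    nlinarith [mul_le_mul_of_nonneg_right hlog hγ.le, div_mul_cancel₀ v hγ.ne']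
  calc v ^ γ = exp (log v * γ) := rpow_def_of_pos hv γ
    _ ≤ exp (log (γ / exp 1) * γ + v) := exp_le_exp.2 hexponent
    _ = (γ / exp 1) ^ γ * exp v := by rw [exp_add, rpow_def_of_pos (by positivity)]

lemma posPart_sub_rpow_le_mul_exp {γ t : ℝ} (hγ : 0 < γ) (ht : 0 < t) (lam x : ℝ) :
    (max (lam - x) 0) ^ γ ≤ (γ / exp 1) ^ γ * t ^ (-γ) * exp (t * lam) * exp (-t * x) := by
  rcases le_or_gt lam x with hle | hlt
  · rw [max_eq_right (by linarith), zero_rpow hγ.ne']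
    positivity
  have hpos : 0 ≤ lam - x := by linarith
  rw [max_eq_left hpos]
  calc (lam - x) ^ γ = t ^ (-γ) * (t * (lam - x)) ^ γ := by
        rw [mul_rpow ht.le hpos, ← mul_assoc, ← rpow_add ht, neg_add_cancel, rpow_zero, one_mul]
    _ ≤ t ^ (-γ) * ((γ / exp 1) ^ γ * exp (t * (lam - x))) := by
        gcongr
        exact rpow_le_div_exp_one_rpow_mul_exp hγ (by positivity)
    _ = (γ / exp 1) ^ γ * t ^ (-γ) * exp (t * lam) * exp (-t * x) := by
        rw [show t * (lam - x) = t * lam + -t * x by ring, exp_add]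
        ring

lemma tsum_posPart_sub_rpow_le_mul_tsum_exp {ι : Type*} (F : ι → ℝ) {γ t : ℝ} (hγ : 0 < γ)
    (ht : 0 < t) (lam : ℝ) :
    ∑' j, ENNReal.ofReal ((max (lam - F j) 0) ^ γ) ≤
      ENNReal.ofReal ((γ / exp 1) ^ γ * t ^ (-γ) * exp (t * lam)) *
        ∑' j, ENNReal.ofReal (exp (-t * F j)) := by
  rw [← ENNReal.tsum_mul_left]
  refine ENNReal.tsum_le_tsum fun j => ?_
  rw [← ENNReal.ofReal_mul (by positivity)]
  exact ENNReal.ofReal_le_ofReal (posPart_sub_rpow_le_mul_exp hγ ht lam (F j))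

lemma lintegral_posPart_rpow_mul_exp_neg_mul {γ t : ℝ} (hγ : 0 < γ) (ht : 0 < t) :
    ∫⁻ μ, ENNReal.ofReal ((max μ 0) ^ γ * exp (-(t * μ))) =
      ENNReal.ofReal ((1 / t) ^ (γ + 1) * Gamma (γ + 1)) := by
  have hGamma := integral_rpow_mul_exp_neg_mul_Ioi (a := γ + 1) (by linarith) ht
  rw [add_sub_cancel_right] at hGamma
  rw [← setLIntegral_eq_of_support_subset (s := Ioi 0), ← hGamma,
    ofReal_integral_eq_lintegral_ofReal]
  · refine setLIntegral_congr_fun measurableSet_Ioi fun μ (hμ : 0 < μ) => ?_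
    rw [max_eq_left hμ.le]
  · exact .of_integral_ne_zero (by rw [hGamma]; positivity)
  · filter_upwards [ae_restrict_mem measurableSet_Ioi] with μ (hμ : 0 < μ)
    positivity
  · intro μ hμ
    by_contra hμ'
    rw [mem_Ioi, not_lt] at hμ'
    simp [max_eq_right hμ', zero_rpow hγ.ne'] at hμ

lemma lintegral_posPart_sub_rpow_mul_exp_neg_mul {γ t : ℝ} (hγ : 0 < γ) (ht : 0 < t) (b : ℝ) :
    ∫⁻ μ, ENNReal.ofReal ((max (μ - b) 0) ^ γ * exp (-(t * μ))) =
      ENNReal.ofReal ((1 / t) ^ (γ + 1) * Gamma (γ + 1)) * ENNReal.ofReal (exp (-t * b)) := by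
  have hshift : ∀ μ, ENNReal.ofReal ((max (μ - b) 0) ^ γ * exp (-(t * μ))) =
      ENNReal.ofReal ((max (μ - b) 0) ^ γ * exp (-(t * (μ - b)))) *
        ENNReal.ofReal (exp (-t * b)) := fun μ => by
    rw [← ENNReal.ofReal_mul (by positivity), mul_assoc, ← exp_add]
    ring_nf
  simp_rw [hshift]
  rw [lintegral_mul_const' _ _ ENNReal.ofReal_ne_top,
    lintegral_sub_right_eq_self (fun μ => ENNReal.ofReal ((max μ 0) ^ γ * exp (-(t * μ)))) b,
    lintegral_posPart_rpow_mul_exp_neg_mul hγ ht]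

lemma tsum_exp_neg_mul_le_of_tsum_posPart_sub_rpow_le {ι : Type*} [Countable ι] (E : ι → ℝ)
    {γ α C t : ℝ} (hγ : 0 < γ) (hα : 0 < α) (hC : 0 ≤ C) (ht : 0 < t)
    (hRiesz : ∀ μ, ∑' j, ENNReal.ofReal ((max (μ - E j) 0) ^ γ) ≤
      ENNReal.ofReal (C * (max μ 0) ^ α)) :
    ∑' j, ENNReal.ofReal (exp (-t * E j)) ≤
      ENNReal.ofReal (C * (Gamma (α + 1) / Gamma (γ + 1)) * t ^ (γ - α)) := by
  set Lγ := (1 / t) ^ (γ + 1) * Gamma (γ + 1)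
  have hLγ : 0 < Lγ := mul_pos (by positivity) (Gamma_pos_of_pos (by linarith))
  have hlaplace : ENNReal.ofReal Lγ * ∑' j, ENNReal.ofReal (exp (-t * E j)) ≤
      ENNReal.ofReal C * ENNReal.ofReal ((1 / t) ^ (α + 1) * Gamma (α + 1)) :=
    calc ENNReal.ofReal Lγ * ∑' j, ENNReal.ofReal (exp (-t * E j))
        = ∫⁻ μ, ∑' j, ENNReal.ofReal ((max (μ - E j) 0) ^ γ * exp (-(t * μ))) := by
          rw [lintegral_tsum fun j => by fun_prop, ← ENNReal.tsum_mul_left]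
          simp_rw [lintegral_posPart_sub_rpow_mul_exp_neg_mul hγ ht]
          rfl
      _ ≤ ∫⁻ μ, ENNReal.ofReal C * ENNReal.ofReal ((max μ 0) ^ α * exp (-(t * μ))) := by
          refine lintegral_mono fun μ => ?_
          simp_rw [ENNReal.ofReal_mul (rpow_nonneg (le_max_right _ 0) _), ENNReal.tsum_mul_right,
            ← mul_assoc, ← ENNReal.ofReal_mul hC]
          gcongr
          exact hRiesz μ
      _ = ENNReal.ofReal C * ENNReal.ofReal ((1 / t) ^ (α + 1) * Gamma (α + 1)) := by
          rw [lintegral_const_mul' _ _ ENNReal.ofReal_ne_top,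
            lintegral_posPart_rpow_mul_exp_neg_mul hα ht]
  have hconst : C * ((1 / t) ^ (α + 1) * Gamma (α + 1)) =
      Lγ * (C * (Gamma (α + 1) / Gamma (γ + 1)) * t ^ (γ - α)) := by
    have hG : Gamma (γ + 1) ≠ 0 := (Gamma_pos_of_pos (by linarith)).ne'
    simp only [Lγ, one_div, inv_rpow ht.le, rpow_sub ht, rpow_add ht, rpow_one]
    field_simp
  rw [← ENNReal.ofReal_mul hC, hconst, ENNReal.ofReal_mul hLγ.le] at hlaplace
  exact (ENNReal.mul_le_mul_iff_right (by simpa using hLγ) ENNReal.ofReal_ne_top).1 hlaplace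

lemma tsum_posPart_sub_rpow_le_of_nonneg {ι : Type*} (E : ι → ℝ) {γ α C : ℝ}
    (hE : ∀ j, 0 ≤ E j) (hγ : 0 < γ)
    (hRiesz : ∀ lam, 0 ≤ lam → ∑' j, ENNReal.ofReal ((max (lam - E j) 0) ^ γ) ≤
      ENNReal.ofReal (C * lam ^ α)) (μ : ℝ) :
    ∑' j, ENNReal.ofReal ((max (μ - E j) 0) ^ γ) ≤ ENNReal.ofReal (C * (max μ 0) ^ α) := by
  rcases le_or_gt 0 μ with hμ | hμ
  · rw [max_eq_left hμ]
    exact hRiesz μ hμ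
  · have hvanish : ∀ j, ENNReal.ofReal ((max (μ - E j) 0) ^ γ) = 0 := fun j => by
      rw [max_eq_right (by linarith [hE j]), zero_rpow hγ.ne', ENNReal.ofReal_zero]
    simp [hvanish]

lemma mul_heat_constants_at_time_div_eq {γ α C R lam : ℝ} (hα : 0 < α) (hlam : 0 < lam) :
    (γ / exp 1) ^ γ * (α / lam) ^ (-γ) * exp (α / lam * lam) * (C * R * (α / lam) ^ (γ - α)) =
      C * (γ / exp 1) ^ γ * (exp 1 / α) ^ α * R * lam ^ α := by
  have ht : 0 < α / lam := div_pos hα hlam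
  have hpow : (α / lam) ^ (-γ) * (α / lam) ^ (γ - α) = lam ^ α / α ^ α := by
    rw [← rpow_add ht, show -γ + (γ - α) = -α by ring, rpow_neg ht.le, ← inv_rpow ht.le,
      inv_div, div_rpow hlam.le hα.le]
  have hexp : exp (α / lam * lam) = exp 1 ^ α := by
    rw [div_mul_cancel₀ α hlam.ne', exp_one_rpow]
  calc (γ / exp 1) ^ γ * (α / lam) ^ (-γ) * exp (α / lam * lam) * (C * R * (α / lam) ^ (γ - α))
      = C * (γ / exp 1) ^ γ * R * exp (α / lam * lam) *
          ((α / lam) ^ (-γ) * (α / lam) ^ (γ - α)) := by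
        ring
    _ = C * (γ / exp 1) ^ γ * (exp 1 / α) ^ α * R * lam ^ α := by
        rw [hpow, hexp, div_rpow (exp_pos 1).le hα.le]
        field_simp

theorem stmt_2_general {ι : Type*} [Countable ι] (E F : ι → ℝ) (γ α C : ℝ)
    (hE : ∀ j, 0 ≤ E j)
    (hγ : 0 < γ) (hγα : γ ≤ α) (hC : 0 < C)
    (hdom : ∀ t : ℝ, 0 < t →
      ∑' j, ENNReal.ofReal (Real.exp (-t * F j)) ≤
        ∑' j, ENNReal.ofReal (Real.exp (-t * E j)))
    (hH : ∀ lam : ℝ, 0 ≤ lam →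
      ∑' j, ENNReal.ofReal ((max (lam - E j) 0) ^ γ) ≤ ENNReal.ofReal (C * lam ^ α)) :
    ∀ lam : ℝ, 0 < lam →
      ∑' j, ENNReal.ofReal ((max (lam - F j) 0) ^ γ) ≤
        ENNReal.ofReal (C * (γ / Real.exp 1) ^ γ * (Real.exp 1 / α) ^ α *
          (Real.Gamma (α + 1) / Real.Gamma (γ + 1)) * lam ^ α) := by
  intro lam hlam
  have hα : 0 < α := hγ.trans_le hγα
  have ht : 0 < α / lam := div_pos hα hlam
  calc ∑' j, ENNReal.ofReal ((max (lam - F j) 0) ^ γ)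
      ≤ ENNReal.ofReal ((γ / exp 1) ^ γ * (α / lam) ^ (-γ) * exp (α / lam * lam)) *
          ∑' j, ENNReal.ofReal (exp (-(α / lam) * F j)) :=
        tsum_posPart_sub_rpow_le_mul_tsum_exp F hγ ht lam
    _ ≤ ENNReal.ofReal ((γ / exp 1) ^ γ * (α / lam) ^ (-γ) * exp (α / lam * lam)) *
          ∑' j, ENNReal.ofReal (exp (-(α / lam) * E j)) :=
        mul_le_mul_right (hdom _ ht) _
    _ ≤ ENNReal.ofReal ((γ / exp 1) ^ γ * (α / lam) ^ (-γ) * exp (α / lam * lam)) *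
          ENNReal.ofReal (C * (Gamma (α + 1) / Gamma (γ + 1)) * (α / lam) ^ (γ - α)) := by
        gcongr
        exact tsum_exp_neg_mul_le_of_tsum_posPart_sub_rpow_le E hγ hα hC.le ht
          (tsum_posPart_sub_rpow_le_of_nonneg E hE hγ hH)
    _ = _ := by
        rw [← ENNReal.ofReal_mul (by positivity), mul_heat_constants_at_time_div_eq hα hlam]

/-- semigroup domination plus a Riesz-mean bound for `E` yields a Riesz-mean
bound for `F` with excess factor `(γ/e)^γ (e/α)^α Γ(α+1)/Γ(γ+1)`. -/
theorem stmt_2 {ι : Type*} [Countable ι] (E F : ι → ℝ) (γ α C : ℝ)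
    (hE : ∀ j, 0 ≤ E j) (hF : ∀ j, 0 ≤ F j)
    (hγ : 0 < γ) (hγα : γ ≤ α) (hC : 0 < C)
    (hdom : ∀ t : ℝ, 0 < t →
      ∑' j, ENNReal.ofReal (Real.exp (-t * F j)) ≤
        ∑' j, ENNReal.ofReal (Real.exp (-t * E j)))
    (hH : ∀ lam : ℝ, 0 ≤ lam →
      ∑' j, ENNReal.ofReal ((max (lam - E j) 0) ^ γ) ≤ ENNReal.ofReal (C * lam ^ α)) :
    ∀ lam : ℝ, 0 < lam →
      ∑' j, ENNReal.ofReal ((max (lam - F j) 0) ^ γ) ≤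
        ENNReal.ofReal (C * (γ / Real.exp 1) ^ γ * (Real.exp 1 / α) ^ α *
          (Real.Gamma (α + 1) / Real.Gamma (γ + 1)) * lam ^ α) :=
  stmt_2_general E F γ α C hE hγ hγα hC hdom hH
end

section
/- Let ι be a countable index set, E : ι → ℝ a family of nonnegative real numbers, and let γ > 0, α ≥ 0, C ≥ 0 be real numbers such that for every λ ≥ 0 one has ∑'_{j∈ι} ((λ - E_j)_+)^γ ≤ C·λ^α. Then for every t > 0 one has ∑'_{j∈ι} exp(-t·E_j) ≤ C·(Γ(α+1)/Γ(γ+1))·t^{γ-α}. -/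
/-!
Integrating the Riesz means against `e^{-tλ}` recovers the heat trace: for `E ≥ 0`, translation
by `E` and the Gamma integral give
`∫₀^∞ ((λ - E)_+)^γ e^{-tλ} dλ = e^{-tE} Γ(γ+1) / t^{γ+1}`.
Summing over `j` (Tonelli), bounding the Riesz mean by `C λ^α` and using
`∫₀^∞ C λ^α e^{-tλ} dλ = C Γ(α+1) / t^{α+1}` yields the bound after dividing by
`Γ(γ+1) / t^{γ+1}`.
-/

open MeasureTheory Set Real

lemma lintegral_rpow_mul_exp_neg_mul_Ioi {a t : ℝ} (ha : -1 < a) (ht : 0 < t) :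
    ∫⁻ s in Ioi (0 : ℝ), ENNReal.ofReal (s ^ a * exp (-t * s)) =
      ENNReal.ofReal (Gamma (a + 1) / t ^ (a + 1)) := by
  have hΓ := Gamma_pos_of_pos (by linarith : 0 < a + 1)
  have key := integral_rpow_mul_exp_neg_mul_Ioi (by linarith : 0 < a + 1) ht
  simp only [add_sub_cancel_right, ← neg_mul] at key
  rw [← ofReal_integral_eq_lintegral_ofReal, key, one_div, inv_rpow ht.le, inv_mul_eq_div]
  · exact .of_integral_ne_zero (by rw [key]; positivity)
  · filter_upwards [ae_restrict_mem measurableSet_Ioi] with s (hs : 0 < s)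
    positivity

lemma support_posPart_rpow_mul_subset_Ioi {E γ : ℝ} (hγ : γ ≠ 0) (g : ℝ → ENNReal) :
    (fun x => ENNReal.ofReal (max (x - E) 0 ^ γ) * g x).support ⊆ Ioi E := by
  intro x hx
  by_contra hxE
  have : max (x - E) 0 = 0 := max_eq_right (by rw [mem_Ioi, not_lt] at hxE; linarith)
  simp [this, zero_rpow hγ] at hx

lemma lintegral_posPart_rpow_mul_exp_neg_mul_Ioi {E γ t : ℝ} (hE : 0 ≤ E) (hγ : 0 < γ)
    (ht : 0 < t) :
    ∫⁻ x in Ioi (0 : ℝ), ENNReal.ofReal (max (x - E) 0 ^ γ) * ENNReal.ofReal (exp (-t * x)) =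
      ENNReal.ofReal (exp (-t * E)) * ENNReal.ofReal (Gamma (γ + 1) / t ^ (γ + 1)) := by
  calc _ = ∫⁻ x, ENNReal.ofReal (max (x - E) 0 ^ γ) * ENNReal.ofReal (exp (-t * x)) :=
        setLIntegral_eq_of_support_subset
          ((support_posPart_rpow_mul_subset_Ioi hγ.ne' _).trans (Ioi_subset_Ioi hE))
    _ = ∫⁻ x, ENNReal.ofReal (max (x + E - E) 0 ^ γ) * ENNReal.ofReal (exp (-t * (x + E))) :=
        (lintegral_add_right_eq_self _ E).symm
    _ = ∫⁻ x in Ioi 0, ENNReal.ofReal (max x 0 ^ γ) * ENNReal.ofReal (exp (-t * (x + E))) := by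
        simpa only [add_sub_cancel_right, sub_zero] using (setLIntegral_eq_of_support_subset
          (support_posPart_rpow_mul_subset_Ioi (E := 0) hγ.ne'
            fun x => ENNReal.ofReal (exp (-t * (x + E))))).symm
    _ = ∫⁻ x in Ioi 0, ENNReal.ofReal (exp (-t * E)) * ENNReal.ofReal (x ^ γ * exp (-t * x)) := by
        refine setLIntegral_congr_fun measurableSet_Ioi fun x (hx : 0 < x) => ?_
        rw [max_eq_left hx.le, mul_add, exp_add, ← ENNReal.ofReal_mul (by positivity),
          ← ENNReal.ofReal_mul (by positivity)]
        ring_nf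
    _ = _ := by
        rw [lintegral_const_mul' _ _ ENNReal.ofReal_ne_top,
          lintegral_rpow_mul_exp_neg_mul_Ioi (by linarith) ht]

noncomputable def rieszMean {ι : Type*} (E : ι → ℝ) (γ lam : ℝ) : ENNReal :=
  ∑' j, ENNReal.ofReal (max (lam - E j) 0 ^ γ)

theorem tsum_exp_mul_eq_lintegral_rieszMean {ι : Type*} [Countable ι] {E : ι → ℝ} {γ t : ℝ}
    (hE : ∀ j, 0 ≤ E j) (hγ : 0 < γ) (ht : 0 < t) :
    (∑' j, ENNReal.ofReal (exp (-t * E j))) * ENNReal.ofReal (Gamma (γ + 1) / t ^ (γ + 1)) =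
      ∫⁻ lam in Ioi 0, rieszMean E γ lam * ENNReal.ofReal (exp (-t * lam)) := by
  simp_rw [rieszMean, ← ENNReal.tsum_mul_right]
  rw [lintegral_tsum fun j => by fun_prop]
  exact tsum_congr fun j => (lintegral_posPart_rpow_mul_exp_neg_mul_Ioi (hE j) hγ ht).symm

/-- a Riesz-mean bound `∑ ((λ-E_j)_+)^γ ≤ C λ^α` implies the heat-trace bound
`∑ e^{-t E_j} ≤ C (Γ(α+1)/Γ(γ+1)) t^{γ-α}`. -/
theorem stmt_3 {ι : Type*} [Countable ι] (E : ι → ℝ) (γ α C : ℝ)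
    (hE : ∀ j, 0 ≤ E j) (hγ : 0 < γ) (hα : 0 ≤ α) (hC : 0 ≤ C)
    (h : ∀ lam : ℝ, 0 ≤ lam →
      ∑' j, ENNReal.ofReal ((max (lam - E j) 0) ^ γ) ≤ ENNReal.ofReal (C * lam ^ α)) :
    ∀ t : ℝ, 0 < t →
      ∑' j, ENNReal.ofReal (Real.exp (-t * E j)) ≤
        ENNReal.ofReal (C * (Real.Gamma (α + 1) / Real.Gamma (γ + 1)) * t ^ (γ - α)) := by
  intro t ht
  have hΓγ := Gamma_pos_of_pos (by linarith : 0 < γ + 1)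
  have hΓα := Gamma_pos_of_pos (by linarith : 0 < α + 1)
  have hK : 0 < Gamma (γ + 1) / t ^ (γ + 1) := by positivity
  rw [← ENNReal.mul_le_mul_iff_left (ENNReal.ofReal_pos.2 hK).ne' ENNReal.ofReal_ne_top,
    tsum_exp_mul_eq_lintegral_rieszMean hE hγ ht]
  calc _ ≤ ∫⁻ lam in Ioi 0, ENNReal.ofReal C * ENNReal.ofReal (lam ^ α * exp (-t * lam)) :=
        setLIntegral_mono' measurableSet_Ioi fun lam (hlam : 0 < lam) => by
          rw [ENNReal.ofReal_mul (by positivity), ← mul_assoc, ← ENNReal.ofReal_mul hC]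
          gcongr
          exact h lam hlam.le
    _ = ENNReal.ofReal C * ENNReal.ofReal (Gamma (α + 1) / t ^ (α + 1)) := by
        rw [lintegral_const_mul' _ _ ENNReal.ofReal_ne_top,
          lintegral_rpow_mul_exp_neg_mul_Ioi (by linarith) ht]
    _ = _ := by
        have hpow : t ^ (γ + 1) = t ^ (γ - α) * t ^ (α + 1) := by
          rw [← rpow_add ht]; ring_nf
        rw [← ENNReal.ofReal_mul hC, ← ENNReal.ofReal_mul (by positivity), hpow]
        field_simp
end

section
/- Let ι be a countable index set and E : ι → ℝ a family of real numbers. Let σ > γ > 0, κ ≥ 0 and C > 0 be real numbers, and define b(γ,σ) := σ^{-σ}·γ^γ·(σ-γ)^{σ-γ}. Assume that for every λ > 0 one has ∑'_{j∈ι} ((λ - E_j)_+)^σ ≤ C·λ^{σ+κ}. Then for every λ > 0 one has ∑'_{j∈ι} ((λ - E_j)_+)^γ ≤ C·(b(γ,σ)/b(γ+κ,σ+κ))·λ^{γ+κ}. -/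
/-!
Weighted AM–GM gives `s ^ γ * a ^ (σ - γ) ≤ b(γ,σ) * (s + a) ^ σ` for `s, a ≥ 0`; indeed `b(γ,σ)`
is the maximum of `t ^ γ * (1 - t) ^ (σ - γ)` on `[0, 1]`. Taking `s = (λ - E j)₊` and `a = μ - λ`
bounds the Riesz mean of order `γ` at `λ` by `b(γ,σ) (μ - λ) ^ (γ - σ)` times the Riesz mean of
order `σ` at `μ`, hence by `C b(γ,σ) (μ - λ) ^ (γ - σ) μ ^ (σ + κ)`. For `μ = λ (σ + κ) / (γ + κ)`
this is exactly `C b(γ,σ) / b(γ+κ,σ+κ) λ ^ (γ + κ)`.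
-/

/-- The constant `b(γ,σ) = σ^{-σ} γ^γ (σ-γ)^{σ-γ}` from Lemma 3.2 of the paper
(real powers). -/
noncomputable def lemmaB (γ σ : ℝ) : ℝ := σ ^ (-σ) * γ ^ γ * (σ - γ) ^ (σ - γ)

open Real

lemma lemmaB_pos {γ σ : ℝ} (hγ : 0 < γ) (hγσ : γ < σ) : 0 < lemmaB γ σ := by
  have := hγ.trans hγσ
  have := sub_pos.2 hγσ
  unfold lemmaB
  positivity

lemma div_rpow_mul_div_rpow_le {p q x y : ℝ} (hp : 0 < p) (hq : 0 < q) (hx : 0 ≤ x)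
    (hy : 0 ≤ y) : (x / p) ^ p * (y / q) ^ q ≤ ((x + y) / (p + q)) ^ (p + q) := by
  have hpq : 0 < p + q := add_pos hp hq
  have hAM := geom_mean_le_arith_mean2_weighted (w₁ := p / (p + q)) (w₂ := q / (p + q))
    (p₁ := x / p) (p₂ := y / q) (by positivity) (by positivity) (by positivity) (by positivity)
    (by field_simp)
  have hmean : p / (p + q) * (x / p) + q / (p + q) * (y / q) = (x + y) / (p + q) := by
    field_simp
  calc (x / p) ^ p * (y / q) ^ q
      = ((x / p) ^ (p / (p + q)) * (y / q) ^ (q / (p + q))) ^ (p + q) := by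
        rw [mul_rpow (by positivity) (by positivity), ← rpow_mul (by positivity),
          ← rpow_mul (by positivity), div_mul_cancel₀ _ hpq.ne', div_mul_cancel₀ _ hpq.ne']
    _ ≤ ((x + y) / (p + q)) ^ (p + q) := by
        rw [← hmean]
        exact rpow_le_rpow (by positivity) hAM hpq.le

lemma rpow_mul_rpow_le_lemmaB_mul {γ σ s a : ℝ} (hγ : 0 < γ) (hγσ : γ < σ) (hs : 0 ≤ s)
    (ha : 0 ≤ a) : s ^ γ * a ^ (σ - γ) ≤ lemmaB γ σ * (s + a) ^ σ := by
  have hσ := hγ.trans hγσ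
  have hσγ := sub_pos.2 hγσ
  have h := div_rpow_mul_div_rpow_le hγ hσγ hs ha
  rw [add_sub_cancel, div_rpow hs hγ.le, div_rpow ha hσγ.le, div_rpow (by positivity) hσ.le]
    at h
  calc s ^ γ * a ^ (σ - γ)
      = γ ^ γ * (σ - γ) ^ (σ - γ) * (s ^ γ / γ ^ γ * (a ^ (σ - γ) / (σ - γ) ^ (σ - γ))) := by
        field_simp
    _ ≤ γ ^ γ * (σ - γ) ^ (σ - γ) * ((s + a) ^ σ / σ ^ σ) := by gcongr
    _ = lemmaB γ σ * (s + a) ^ σ := by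
        rw [lemmaB, rpow_neg hσ.le]
        ring

lemma max_sub_rpow_le_lemmaB_mul {γ σ a lam e : ℝ} (hγ : 0 < γ) (hγσ : γ < σ) (ha : 0 < a) :
    max (lam - e) 0 ^ γ ≤ lemmaB γ σ * a ^ (γ - σ) * max (lam + a - e) 0 ^ σ := by
  rcases le_or_gt (lam - e) 0 with hle | hlt
  · rw [max_eq_right hle, zero_rpow hγ.ne']
    have := lemmaB_pos hγ hγσ
    positivity
  · rw [max_eq_left hlt.le, max_eq_left (by linarith), add_sub_right_comm]
    have hinv : a ^ (σ - γ) * a ^ (γ - σ) = 1 := by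
      rw [← rpow_add ha, sub_add_sub_cancel', sub_self, rpow_zero]
    calc (lam - e) ^ γ = (lam - e) ^ γ * a ^ (σ - γ) * a ^ (γ - σ) := by
          rw [mul_assoc, hinv, mul_one]
      _ ≤ lemmaB γ σ * (lam - e + a) ^ σ * a ^ (γ - σ) := by
          gcongr ?_ * _
          exact rpow_mul_rpow_le_lemmaB_mul hγ hγσ hlt.le ha.le
      _ = _ := by ring

lemma lemmaB_mul_rpow_mul_rpow {x y lam : ℝ} (hx : 0 < x) (hxy : x < y) (hlam : 0 < lam) :
    lemmaB x y * (lam * (y - x) / x) ^ (x - y) * (lam * y / x) ^ y = lam ^ x := by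
  have hy := hx.trans hxy
  have hyx := sub_pos.2 hxy
  have hB := lemmaB_pos hx hxy
  refine log_injOn_pos (Set.mem_Ioi.2 (by positivity)) (Set.mem_Ioi.2 (by positivity)) ?_
  rw [log_mul (by positivity) (by positivity), log_mul (by positivity) (by positivity),
    lemmaB, log_mul (by positivity) (by positivity), log_mul (by positivity) (by positivity),
    log_rpow (by positivity), log_rpow (by positivity), log_rpow (by positivity),
    log_rpow (by positivity), log_rpow (by positivity), log_rpow hlam,
    log_div (by positivity) hx.ne', log_div (by positivity) hx.ne',
    log_mul hlam.ne' hyx.ne', log_mul hlam.ne' hy.ne']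
  ring

theorem stmt_7_general {ι : Type*} (E : ι → ℝ) (γ σ κ C : ℝ)
    (hγ : 0 < γ) (hγσ : γ < σ) (hκ : 0 ≤ κ)
    (h : ∀ lam : ℝ, 0 < lam →
      ∑' j, ENNReal.ofReal ((max (lam - E j) 0) ^ σ) ≤
        ENNReal.ofReal (C * lam ^ (σ + κ))) :
    ∀ lam : ℝ, 0 < lam →
      ∑' j, ENNReal.ofReal ((max (lam - E j) 0) ^ γ) ≤
        ENNReal.ofReal (C * (lemmaB γ σ / lemmaB (γ + κ) (σ + κ)) * lam ^ (γ + κ)) := by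
  intro lam hlam
  have hγκ : 0 < γ + κ := by linarith
  set a := lam * (σ - γ) / (γ + κ)
  set μ := lam * (σ + κ) / (γ + κ)
  have ha : 0 < a := div_pos (mul_pos hlam (sub_pos.2 hγσ)) hγκ
  have hμ : lam + a = μ := by simp only [a, μ]; field_simp; ring
  set K := lemmaB γ σ * a ^ (γ - σ)
  have hK : 0 ≤ K := (mul_pos (lemmaB_pos hγ hγσ) (rpow_pos_of_pos ha _)).le
  have hpointwise (j : ι) : max (lam - E j) 0 ^ γ ≤ K * max (μ - E j) 0 ^ σ :=
    hμ ▸ max_sub_rpow_le_lemmaB_mul hγ hγσ ha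
  have hconst : K * μ ^ (σ + κ) = lemmaB γ σ / lemmaB (γ + κ) (σ + κ) * lam ^ (γ + κ) := by
    have hB := lemmaB_mul_rpow_mul_rpow hγκ (by linarith : γ + κ < σ + κ) hlam
    rw [add_sub_add_right_eq_sub, add_sub_add_right_eq_sub] at hB
    rw [div_mul_eq_mul_div, eq_div_iff (lemmaB_pos hγκ (by linarith)).ne', ← hB]
    ring
  calc ∑' j, ENNReal.ofReal (max (lam - E j) 0 ^ γ)
      ≤ ∑' j, ENNReal.ofReal K * ENNReal.ofReal (max (μ - E j) 0 ^ σ) :=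
        ENNReal.tsum_le_tsum fun j => by
          rw [← ENNReal.ofReal_mul hK]
          exact ENNReal.ofReal_le_ofReal (hpointwise j)
    _ = ENNReal.ofReal K * ∑' j, ENNReal.ofReal (max (μ - E j) 0 ^ σ) := ENNReal.tsum_mul_left
    _ ≤ ENNReal.ofReal K * ENNReal.ofReal (C * μ ^ (σ + κ)) :=
        mul_le_mul_right (h μ (hμ ▸ add_pos hlam ha)) _
    _ = ENNReal.ofReal (C * (lemmaB γ σ / lemmaB (γ + κ) (σ + κ)) * lam ^ (γ + κ)) := by
        rw [← ENNReal.ofReal_mul hK, mul_assoc C, ← hconst]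
        ring_nf

/-- a Riesz-mean bound of order `σ` implies one of order `γ < σ` with
constant multiplied by `b(γ,σ)/b(γ+κ,σ+κ)`. -/
theorem stmt_7 {ι : Type*} [Countable ι] (E : ι → ℝ) (γ σ κ C : ℝ)
    (hγ : 0 < γ) (hγσ : γ < σ) (hκ : 0 ≤ κ) (hC : 0 < C)
    (h : ∀ lam : ℝ, 0 < lam →
      ∑' j, ENNReal.ofReal ((max (lam - E j) 0) ^ σ) ≤
        ENNReal.ofReal (C * lam ^ (σ + κ))) :
    ∀ lam : ℝ, 0 < lam →
      ∑' j, ENNReal.ofReal ((max (lam - E j) 0) ^ γ) ≤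
        ENNReal.ofReal (C * (lemmaB γ σ / lemmaB (γ + κ) (σ + κ)) * lam ^ (γ + κ)) :=
  stmt_7_general E γ σ κ C hγ hγσ hκ h
end

section
/- Let ι be a countable index set and E : ι → ℝ a family of real numbers. Let σ > 0, κ > 0 and C > 0 be real numbers, and assume that for every λ > 0 one has ∑'_{j∈ι} ((λ - E_j)_+)^σ ≤ C·λ^{σ+κ}. Then for every λ > 0 the set {j ∈ ι : E_j < λ} is finite and its cardinality is at most C·(σ+κ)^{σ+κ}·κ^{-κ}·σ^{-σ}·λ^κ. -/
/-! Shift the spectral parameter from `λ` to `μ = λ (σ + κ) / κ`. Every `j` with `E j < λ`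
contributes at least `(μ - λ)^σ = (λ σ / κ)^σ` to the Riesz mean at `μ`, so
`#{E < λ} · (λ σ / κ)^σ ≤ C μ^{σ+κ}`; the choice of `μ` minimises the resulting bound. -/

open scoped ENNReal

lemma ENNReal.encard_mul_le_tsum {ι : Type*} {s : Set ι} {c : ℝ≥0∞} {f : ι → ℝ≥0∞}
    (h : ∀ j ∈ s, c ≤ f j) : (s.encard : ℝ≥0∞) * c ≤ ∑' j, f j :=
  calc (s.encard : ℝ≥0∞) * c = ∑' _ : s, c := (ENNReal.tsum_set_const s c).symm
    _ ≤ ∑' j : s, f j := ENNReal.tsum_le_tsum fun j => h j j.2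
    _ ≤ ∑' j, f j := ENNReal.tsum_comp_le_tsum_of_injective Subtype.val_injective f

lemma Set.finite_and_ncard_mul_le_of_encard_mul_le {ι : Type*} {s : Set ι} {c B : ℝ}
    (hc : 0 < c) (hB : 0 ≤ B) (h : (s.encard : ℝ≥0∞) * ENNReal.ofReal c ≤ ENNReal.ofReal B) :
    s.Finite ∧ s.ncard * c ≤ B := by
  have hfin : s.Finite := by
    rw [← Set.encard_lt_top_iff, ← ENat.toENNReal_lt_top]
    refine ENNReal.lt_top_of_mul_ne_top_left (h.trans_lt ENNReal.ofReal_lt_top).ne ?_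
    exact ENNReal.ofReal_pos.2 hc |>.ne'
  refine ⟨hfin, ?_⟩
  rw [← hfin.cast_ncard_eq, ENat.toENNReal_coe, ← ENNReal.ofReal_natCast,
    ← ENNReal.ofReal_mul (Nat.cast_nonneg _), ENNReal.ofReal_le_ofReal_iff hB] at h
  exact h

lemma Real.rieszShift_rpow_div {lam σ κ : ℝ} (hlam : 0 < lam) (hσ : 0 < σ) (hκ : 0 < κ) :
    (lam * (σ + κ) / κ) ^ (σ + κ) / (lam * σ / κ) ^ σ =
      (σ + κ) ^ (σ + κ) * κ ^ (-κ) * σ ^ (-σ) * lam ^ κ := by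
  rw [Real.div_rpow (by positivity) hκ.le, Real.mul_rpow hlam.le (by positivity),
    Real.div_rpow (by positivity) hκ.le, Real.mul_rpow hlam.le hσ.le,
    Real.rpow_add hlam, Real.rpow_add hκ, Real.rpow_neg hκ.le, Real.rpow_neg hσ.le]
  have : 0 < lam ^ σ := Real.rpow_pos_of_pos hlam σ
  have : 0 < σ ^ σ := Real.rpow_pos_of_pos hσ σ
  have : 0 < κ ^ σ := Real.rpow_pos_of_pos hκ σ
  have : 0 < κ ^ κ := Real.rpow_pos_of_pos hκ κ
  field_simp

theorem stmt_8_general {ι : Type*} (E : ι → ℝ) (σ κ C : ℝ)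
    (hσ : 0 < σ) (hκ : 0 < κ) (hC : 0 < C)
    (h : ∀ lam : ℝ, 0 < lam →
      ∑' j, ENNReal.ofReal ((max (lam - E j) 0) ^ σ) ≤
        ENNReal.ofReal (C * lam ^ (σ + κ))) :
    ∀ lam : ℝ, 0 < lam →
      {j | E j < lam}.Finite ∧
        ({j | E j < lam}.ncard : ℝ) ≤
          C * (σ + κ) ^ (σ + κ) * κ ^ (-κ) * σ ^ (-σ) * lam ^ κ := by
  intro lam hlam
  set μ := lam * (σ + κ) / κ
  have hgap : μ - lam = lam * σ / κ := by simp only [μ]; field_simp; ring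
  have hcontrib : ∀ j ∈ {j | E j < lam},
      ENNReal.ofReal ((lam * σ / κ) ^ σ) ≤ ENNReal.ofReal ((max (μ - E j) 0) ^ σ) := by
    intro j hj
    refine ENNReal.ofReal_le_ofReal (Real.rpow_le_rpow (by positivity) ?_ hσ.le)
    have hj : E j < lam := hj
    exact le_max_of_le_left (by rw [← hgap]; linarith)
  obtain ⟨hfin, hcard⟩ := Set.finite_and_ncard_mul_le_of_encard_mul_le (by positivity)
    (by positivity) ((ENNReal.encard_mul_le_tsum hcontrib).trans (h μ (by positivity)))
  refine ⟨hfin, ?_⟩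
  calc ({j | E j < lam}.ncard : ℝ) ≤ C * μ ^ (σ + κ) / (lam * σ / κ) ^ σ :=
        (le_div_iff₀ (by positivity)).2 hcard
    _ = C * (σ + κ) ^ (σ + κ) * κ ^ (-κ) * σ ^ (-σ) * lam ^ κ := by
        rw [mul_div_assoc, Real.rieszShift_rpow_div hlam hσ hκ]; ring

/-- γ = 0 case of Lemma 3.2: a Riesz-mean bound of order `σ` bounds the
eigenvalue counting function: `#{j : E_j < λ} ≤ C (σ+κ)^{σ+κ} κ^{-κ} σ^{-σ} λ^κ`. -/
theorem stmt_8 {ι : Type*} [Countable ι] (E : ι → ℝ) (σ κ C : ℝ)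
    (hσ : 0 < σ) (hκ : 0 < κ) (hC : 0 < C)
    (h : ∀ lam : ℝ, 0 < lam →
      ∑' j, ENNReal.ofReal ((max (lam - E j) 0) ^ σ) ≤
        ENNReal.ofReal (C * lam ^ (σ + κ))) :
    ∀ lam : ℝ, 0 < lam →
      {j | E j < lam}.Finite ∧
        ({j | E j < lam}.ncard : ℝ) ≤
          C * (σ + κ) ^ (σ + κ) * κ ^ (-κ) * σ ^ (-σ) * lam ^ κ :=
  stmt_8_general E σ κ C hσ hκ hC h
end

section
/- Let σ > γ > 0 be real numbers and let μ > λ be real numbers. Then for every E ∈ ℝ one has ((λ - E)_+)^γ ≤ σ^{-σ}·γ^γ·(σ-γ)^{σ-γ}·(μ-λ)^{γ-σ}·((μ - E)_+)^σ. -/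
open Real

/-- Weighted AM-GM with weights `p/(p+q)`, `q/(p+q)` applied to `(p+q)/p * x` and `(p+q)/q * y`,
then raised to the power `p + q`; equality holds when `x / p = y / q`, so the constant is sharp. -/
lemma rpow_mul_rpow_le_add_rpow {x y p q : ℝ} (hx : 0 ≤ x) (hy : 0 ≤ y) (hp : 0 < p)
    (hq : 0 < q) : (p + q) ^ (p + q) * (x ^ p * y ^ q) ≤ p ^ p * q ^ q * (x + y) ^ (p + q) := by
  set s := p + q
  have hs : 0 < s := add_pos hp hq
  have amgm : (s / p * x) ^ (p / s) * (s / q * y) ^ (q / s) ≤ x + y := by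
    calc (s / p * x) ^ (p / s) * (s / q * y) ^ (q / s)
        ≤ p / s * (s / p * x) + q / s * (s / q * y) :=
          Real.geom_mean_le_arith_mean2_weighted (by positivity) (by positivity) (by positivity)
            (by positivity) (by rw [← add_div, div_self hs.ne'])
      _ = x + y := by field_simp
  have h := rpow_le_rpow (by positivity) amgm hs.le
  rw [mul_rpow (by positivity) (by positivity), ← rpow_mul (by positivity),
    ← rpow_mul (by positivity), div_mul_cancel₀ _ hs.ne', div_mul_cancel₀ _ hs.ne',
    mul_rpow (by positivity) hx, mul_rpow (by positivity) hy, div_rpow hs.le hp.le,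
    div_rpow hs.le hq.le] at h
  have hss : s ^ s = s ^ p * s ^ q := rpow_add hs p q
  have hpp : 0 < p ^ p := by positivity
  have hqq : 0 < q ^ q := by positivity
  rw [hss]
  calc s ^ p * s ^ q * (x ^ p * y ^ q)
      = p ^ p * q ^ q * (s ^ p / p ^ p * x ^ p * (s ^ q / q ^ q * y ^ q)) := by
        field_simp
    _ ≤ p ^ p * q ^ q * (x + y) ^ s := by gcongr

/-- the pointwise inequality
`((λ-E)_+)^γ ≤ σ^{-σ} γ^γ (σ-γ)^{σ-γ} (μ-λ)^{γ-σ} ((μ-E)_+)^σ` for `σ > γ > 0`, `μ > λ`. -/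
theorem stmt_9 (γ σ : ℝ) (hγ : 0 < γ) (hγσ : γ < σ) (lam μ : ℝ) (hlm : lam < μ) (E : ℝ) :
    (max (lam - E) 0) ^ γ ≤
      σ ^ (-σ) * γ ^ γ * (σ - γ) ^ (σ - γ) * (μ - lam) ^ (γ - σ) * (max (μ - E) 0) ^ σ := by
  have hσ : 0 < σ := hγ.trans hγσ
  have hd : 0 < μ - lam := sub_pos.2 hlm
  rcases le_or_gt lam E with hE | hE
  · rw [max_eq_right (by linarith), zero_rpow hγ.ne']
    positivity
  rw [max_eq_left (by linarith), max_eq_left (by linarith)]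
  have key := rpow_mul_rpow_le_add_rpow (sub_pos.2 hE).le hd.le hγ (sub_pos.2 hγσ)
  rw [add_sub_cancel, sub_add_sub_cancel'] at key
  have hσσ : 0 < σ ^ σ := by positivity
  have hdd : 0 < (μ - lam) ^ (σ - γ) := by positivity
  rw [rpow_neg hσ.le, ← neg_sub σ γ, rpow_neg hd.le]
  calc (lam - E) ^ γ
      = σ ^ σ * ((lam - E) ^ γ * (μ - lam) ^ (σ - γ)) / (σ ^ σ * (μ - lam) ^ (σ - γ)) := by
        field_simp
    _ ≤ γ ^ γ * (σ - γ) ^ (σ - γ) * (μ - E) ^ σ / (σ ^ σ * (μ - lam) ^ (σ - γ)) := by gcongr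
    _ = _ := by field_simp
end

section
/- Let B > 0 and let φ : ℝ → ℝ be a function that is convex on [0,∞), nonnegative on [0,∞), and Lebesgue integrable on (0,∞). Then the series ∑_{k=1}^∞ φ((2k-1)·B) converges and ∑_{k=1}^∞ φ((2k-1)·B) ≤ (1/(2B))·∫_0^∞ φ(λ) dλ. -/
/-!
The Landau levels `(2k+1)B` are the midpoints of the cells `[2kB, 2(k+1)B]` tiling `[0, ∞)`.
By the Hermite–Hadamard inequality a convex function at the midpoint of a cell is at most its
mean over the cell, so `2B` times a partial sum is at most `∫₀^{2nB} φ`, which by `φ ≥ 0` is at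
most `∫₀^∞ φ`; a nonnegative series with bounded partial sums converges.
-/

open MeasureTheory Set

/- The reflection `x ↦ a + b - x` preserves `∫ x in a..b, f x`, and convexity gives
`2 f ((a + b) / 2) ≤ f x + f (a + b - x)`. -/
theorem ConvexOn.mul_le_intervalIntegral {s : Set ℝ} {f : ℝ → ℝ} (hf : ConvexOn ℝ s f)
    {a b : ℝ} (hab : a ≤ b) (hs : Icc a b ⊆ s) (hi : IntervalIntegrable f volume a b) :
    (b - a) * f ((a + b) / 2) ≤ ∫ x in a..b, f x := by
  have hreflect : ∫ x in a..b, f (a + b - x) = ∫ x in a..b, f x := by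
    simp [intervalIntegral.integral_comp_sub_left]
  have hi' : IntervalIntegrable (fun x => f (a + b - x)) volume a b := by
    simpa using (hi.comp_sub_left (a + b)).symm
  have hpoint : ∀ x ∈ Icc a b, 2 * f ((a + b) / 2) ≤ f x + f (a + b - x) := by
    intro x hx
    have hx' : a + b - x ∈ s := hs ⟨by linarith [hx.2], by linarith [hx.1]⟩
    have hmidpoint := hf.2 (hs hx) hx' (by norm_num : (0 : ℝ) ≤ 1 / 2)
      (by norm_num : (0 : ℝ) ≤ 1 / 2) (by norm_num)
    simp only [smul_eq_mul] at hmidpoint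
    rw [show 1 / 2 * x + 1 / 2 * (a + b - x) = (a + b) / 2 by ring] at hmidpoint
    linarith
  have hmono := intervalIntegral.integral_mono_on hab intervalIntegrable_const (hi.add hi') hpoint
  rw [intervalIntegral.integral_const, intervalIntegral.integral_add hi hi', hreflect,
    smul_eq_mul] at hmono
  linarith

theorem intervalIntegral_le_setIntegral_Ioi {f : ℝ → ℝ} {a b : ℝ} (hab : a ≤ b)
    (hf : ∀ x, a < x → 0 ≤ f x) (hi : IntegrableOn f (Ioi a)) :
    ∫ x in a..b, f x ≤ ∫ x in Ioi a, f x := by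
  rw [intervalIntegral.integral_of_le hab]
  refine setIntegral_mono_set hi ?_ (Filter.Eventually.of_forall Ioc_subset_Ioi_self)
  filter_upwards [ae_restrict_mem measurableSet_Ioi] with x hx using hf x hx

theorem ConvexOn.mul_sum_range_le_intervalIntegral {f : ℝ → ℝ} (hf : ConvexOn ℝ (Ici 0) f)
    {h : ℝ} (hh : 0 ≤ h) (n : ℕ) (hi : IntervalIntegrable f volume 0 (2 * n * h)) :
    2 * h * ∑ k ∈ Finset.range n, f ((2 * k + 1) * h) ≤ ∫ x in 0..(2 * n * h), f x := by
  have hgrid : ∀ k ≤ n, 0 ≤ 2 * (k : ℝ) * h ∧ 2 * (k : ℝ) * h ≤ 2 * n * h := fun k hk =>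
    ⟨by positivity, by gcongr⟩
  have hpiece : ∀ k < n,
      IntervalIntegrable f volume (2 * (k : ℝ) * h) (2 * ((k + 1 : ℕ) : ℝ) * h) := by
    intro k hk
    refine hi.mono_set (uIcc_subset_uIcc ?_ ?_) <;> rw [uIcc_of_le (hgrid n le_rfl).1]
    exacts [hgrid k hk.le, hgrid (k + 1) hk]
  calc 2 * h * ∑ k ∈ Finset.range n, f ((2 * k + 1) * h)
      ≤ ∑ k ∈ Finset.range n, ∫ x in (2 * (k : ℝ) * h)..(2 * ((k + 1 : ℕ) : ℝ) * h), f x := by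
        rw [Finset.mul_sum]
        refine Finset.sum_le_sum fun k hk => ?_
        have hmid := hf.mul_le_intervalIntegral (by push_cast; linarith) ?_
          (hpiece k (Finset.mem_range.mp hk))
        · rwa [show 2 * ((k + 1 : ℕ) : ℝ) * h - 2 * k * h = 2 * h by push_cast; ring,
            show (2 * k * h + 2 * ((k + 1 : ℕ) : ℝ) * h) / 2 = (2 * k + 1) * h by push_cast; ring]
            at hmid
        · exact fun x hx => le_trans (by positivity) hx.1
    _ = ∫ x in 0..(2 * n * h), f x := by
        rw [intervalIntegral.sum_integral_adjacent_intervals hpiece]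
        simp

/-- for a nonnegative convex integrable function `φ` on `[0,∞)`, the sum over
Landau levels `(2k-1)B`, `k ≥ 1`, converges and is at most `(1/(2B)) ∫_0^∞ φ(λ) dλ`. -/
theorem stmt_13 (B : ℝ) (hB : 0 < B) (φ : ℝ → ℝ)
    (hconv : ConvexOn ℝ (Set.Ici (0:ℝ)) φ)
    (hnonneg : ∀ x : ℝ, 0 ≤ x → 0 ≤ φ x)
    (hint : IntegrableOn φ (Set.Ioi (0:ℝ))) :
    Summable (fun k : ℕ => φ ((2 * (k : ℝ) + 1) * B)) ∧
      ∑' k : ℕ, φ ((2 * (k : ℝ) + 1) * B) ≤ (1 / (2 * B)) * ∫ lam in Set.Ioi (0:ℝ), φ lam := by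
  have hterm_nonneg : ∀ k : ℕ, 0 ≤ φ ((2 * (k : ℝ) + 1) * B) := fun k =>
    hnonneg _ (by positivity)
  have hpartial : ∀ n : ℕ, ∑ k ∈ Finset.range n, φ ((2 * (k : ℝ) + 1) * B)
      ≤ (1 / (2 * B)) * ∫ lam in Set.Ioi (0:ℝ), φ lam := by
    intro n
    have hlen : (0 : ℝ) ≤ 2 * n * B := by positivity
    have hsum := hconv.mul_sum_range_le_intervalIntegral hB.le n
      ((intervalIntegrable_iff_integrableOn_Ioc_of_le hlen).mpr
        (hint.mono_set Ioc_subset_Ioi_self))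
    have htail := intervalIntegral_le_setIntegral_Ioi hlen (fun x hx => hnonneg x hx.le) hint
    rw [one_div, inv_mul_eq_div, le_div_iff₀ (by positivity)]
    linarith
  exact ⟨summable_of_sum_range_le hterm_nonneg hpartial,
    Real.tsum_le_of_sum_range_le hterm_nonneg hpartial⟩
end

section
/- Let γ ≥ 1 and B > 0 be real numbers. Then for every λ ≥ 0 one has ∑_{k=1}^∞ ((λ - (2k-1)·B)_+)^γ ≤ λ^{γ+1}/(2·B·(γ+1)). -/
/-!
The Landau-level energies `(2k+1)B` are the midpoints of the intervals `[2kB, 2(k+1)B]`, and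
`φ(μ) = ((λ - μ)_+)^γ` is convex for `γ ≥ 1`. By the midpoint half of the Hermite–Hadamard
inequality, `2B φ((2k+1)B) ≤ ∫_{2kB}^{2(k+1)B} φ`, so the sum is bounded by
`(2B)⁻¹ ∫_0^∞ φ = λ^{γ+1} / (2B(γ+1))`.
-/

open Real Set MeasureTheory intervalIntegral

theorem ConvexOn.two_mul_mul_apply_le_integral {f : ℝ → ℝ} {m r : ℝ} (hr : 0 ≤ r)
    (hf : ConvexOn ℝ (Icc (m - r) (m + r)) f)
    (hint : IntervalIntegrable f volume (m - r) (m + r)) :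
    2 * r * f m ≤ ∫ x in (m - r)..(m + r), f x := by
  have hint_refl : IntervalIntegrable (fun x => f (2 * m - x)) volume (m - r) (m + r) := by
    convert hint.symm.comp_sub_left (2 * m) using 1 <;> ring
  have hrefl : ∫ x in (m - r)..(m + r), f (2 * m - x) = ∫ x in (m - r)..(m + r), f x := by
    rw [integral_comp_sub_left]
    congr 1 <;> ring
  have hmid : ∀ x ∈ Icc (m - r) (m + r), 2 * f m ≤ f x + f (2 * m - x) := by
    intro x ⟨hx₁, hx₂⟩
    have h := hf.2 ⟨hx₁, hx₂⟩ (⟨by linarith, by linarith⟩ : 2 * m - x ∈ Icc (m - r) (m + r))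
      (by norm_num : (0 : ℝ) ≤ 1 / 2) (by norm_num : (0 : ℝ) ≤ 1 / 2) (by norm_num)
    have hm : (1 / 2 : ℝ) • x + (1 / 2 : ℝ) • (2 * m - x) = m := by simp only [smul_eq_mul]; ring
    rw [hm, smul_eq_mul, smul_eq_mul] at h
    linarith
  have hmono := integral_mono_on (by linarith) intervalIntegrable_const
    (hint.add hint_refl) hmid
  rw [intervalIntegral.integral_const, integral_add hint hint_refl, hrefl, smul_eq_mul] at hmono
  linarith

theorem ConvexOn.two_mul_mul_sum_midpoints_le_integral {f : ℝ → ℝ} (hf : ConvexOn ℝ univ f)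
    {r : ℝ} (hr : 0 ≤ r) (b : ℝ) (N : ℕ) :
    2 * r * ∑ k ∈ Finset.range N, f (b - (2 * (k : ℝ) + 1) * r) ≤
      ∫ x in (b - 2 * N * r)..b, f x := by
  have hcont : Continuous f := hf.locallyLipschitz.continuous
  induction N with
  | zero => simp
  | succ N ih =>
    have hcell := (hf.subset (subset_univ _) (convex_Icc _ _)).two_mul_mul_apply_le_integral
      (m := b - (2 * (N : ℝ) + 1) * r) hr (hcont.intervalIntegrable _ _)
    have hleft : b - (2 * (N : ℝ) + 1) * r - r = b - 2 * ↑(N + 1) * r := by push_cast; ring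
    have hright : b - (2 * (N : ℝ) + 1) * r + r = b - 2 * N * r := by ring
    rw [hleft, hright] at hcell
    rw [Finset.sum_range_succ, mul_add,
      ← integral_add_adjacent_intervals (hcont.intervalIntegrable _ (b - 2 * N * r))
        (hcont.intervalIntegrable _ _)]
    linarith

section PositivePartPower

variable {γ : ℝ}

theorem convexOn_max_zero_rpow (hγ : 1 ≤ γ) : ConvexOn ℝ univ fun s : ℝ => max s 0 ^ γ := by
  have hmax : ConvexOn ℝ univ fun s : ℝ => max s 0 := convexOn_id convex_univ |>.sup
    (convexOn_const 0 convex_univ)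
  have himage : (fun s : ℝ => max s 0) '' univ = Ici 0 :=
    Set.ext fun x => ⟨by rintro ⟨s, -, rfl⟩; exact le_max_right s 0,
      fun hx => ⟨x, trivial, max_eq_left hx⟩⟩
  exact (himage ▸ convexOn_rpow hγ).comp hmax
    (himage ▸ monotoneOn_rpow_Ici_of_exponent_nonneg (by linarith))

theorem continuous_max_zero_rpow (hγ : 0 ≤ γ) : Continuous fun s : ℝ => max s 0 ^ γ :=
  (continuous_rpow_const hγ).comp (continuous_id.max continuous_const)

theorem hasDerivAt_max_zero_rpow_add_one_div (hγ : 0 < γ) (s : ℝ) :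
    HasDerivAt (fun s : ℝ => max s 0 ^ (γ + 1) / (γ + 1)) (max s 0 ^ γ) s := by
  have hγ₁ : 0 < γ + 1 := by linarith
  refine hasDerivAt_of_hasDerivAt_of_ne' (x := 0) (fun y hy => ?_)
    ((continuous_max_zero_rpow hγ₁.le).div_const _).continuousAt
    (continuous_max_zero_rpow hγ.le).continuousAt s
  rcases hy.lt_or_gt with hy | hy
  · have hzero : (fun s : ℝ => max s 0 ^ (γ + 1) / (γ + 1)) =ᶠ[nhds y] fun _ => 0 := by
      filter_upwards [eventually_lt_nhds hy] with x hx
      rw [max_eq_right hx.le, zero_rpow hγ₁.ne', zero_div]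
    rw [max_eq_right hy.le, zero_rpow hγ.ne']
    exact (hasDerivAt_const y 0).congr_of_eventuallyEq hzero
  · have hpos : (fun s : ℝ => max s 0 ^ (γ + 1) / (γ + 1)) =ᶠ[nhds y]
        fun s => s ^ (γ + 1) / (γ + 1) := by
      filter_upwards [eventually_gt_nhds hy] with x hx
      rw [max_eq_left hx.le]
    have hderiv := (hasDerivAt_rpow_const (p := γ + 1) (Or.inl hy.ne')).div_const (γ + 1)
    rw [add_sub_cancel_right, mul_div_cancel_left₀ _ hγ₁.ne'] at hderiv
    rw [max_eq_left hy.le]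
    exact hderiv.congr_of_eventuallyEq hpos

theorem integral_max_zero_rpow (hγ : 0 < γ) (a b : ℝ) :
    ∫ s in a..b, max s 0 ^ γ = (max b 0 ^ (γ + 1) - max a 0 ^ (γ + 1)) / (γ + 1) := by
  rw [sub_div]
  exact integral_eq_sub_of_hasDerivAt (fun s _ => hasDerivAt_max_zero_rpow_add_one_div hγ s)
    ((continuous_max_zero_rpow hγ.le).intervalIntegrable a b)

end PositivePartPower

/-- for `γ ≥ 1`, `∑_{k≥1} ((λ-(2k-1)B)_+)^γ ≤ λ^{γ+1}/(2B(γ+1))`. -/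
theorem stmt_14 (γ B : ℝ) (hγ : 1 ≤ γ) (hB : 0 < B) :
    ∀ lam : ℝ, 0 ≤ lam →
      ∑' k : ℕ, (max (lam - (2 * (k : ℝ) + 1) * B) 0) ^ γ ≤
        lam ^ (γ + 1) / (2 * B * (γ + 1)) := by
  intro lam hlam
  obtain ⟨N, hN⟩ : ∃ N : ℕ, lam ≤ 2 * N * B := by
    obtain ⟨N, hN⟩ := exists_nat_gt (lam / (2 * B))
    exact ⟨N, by rw [div_lt_iff₀ (by positivity)] at hN; linarith⟩
  have hvanish : ∀ k ∉ Finset.range N, max (lam - (2 * (k : ℝ) + 1) * B) 0 ^ γ = 0 := by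
    intro k hk
    have hNk : (N : ℝ) ≤ k := Nat.cast_le.2 (not_lt.1 (Finset.mem_range.not.1 hk))
    rw [max_eq_right (by nlinarith), zero_rpow (by linarith)]
  have hsum := (convexOn_max_zero_rpow hγ).two_mul_mul_sum_midpoints_le_integral hB.le lam N
  rw [integral_max_zero_rpow (by linarith), max_eq_left hlam, max_eq_right (by linarith),
    zero_rpow (by linarith), sub_zero] at hsum
  rw [tsum_eq_sum hvanish, mul_comm (2 * B), ← div_div, le_div_iff₀ (by positivity)]
  linarith
end

section
/- Let 0 < γ < 1 and B > 0 be real numbers. Then: (i) for every λ > 0, ∑_{k=1}^∞ ((λ - (2k-1)·B)_+)^γ ≤ (γ/(γ+1))^γ · λ^{γ+1}/(B·(γ+1)); and (ii) equality holds for λ = B·(γ+1), where both sides equal (B·γ)^γ. -/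
/-!
Each term is dominated by a telescoping difference: with `C = γ^γ / (γ+1)^(γ+1)`,
`((s - B)₊)^γ ≤ C / B · ((s₊)^(γ+1) - ((s - 2B)₊)^(γ+1))`, and summing over `s = λ - 2kB`
leaves `C λ^(γ+1) / B`. For `B < s ≤ 2B` this is the weighted AM–GM bound
`x^γ y (γ+1)^(γ+1) ≤ γ^γ (x+y)^(γ+1)`, whose equality case `x = γ y` gives equality at
`λ = B(γ+1)`. For `s > 2B` it follows from the same bound at `x = y` together with
`(a+b)^γ (a-b) ≤ a^(γ+1) - b^(γ+1)`, which is where `γ ≤ 1` enters.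
-/

open Real Finset

lemma add_rpow_mul_sub_le_rpow_add_one_sub {γ a b : ℝ} (hγ0 : 0 ≤ γ) (hγ1 : γ ≤ 1)
    (hb : 0 ≤ b) (hba : b ≤ a) :
    (a + b) ^ γ * (a - b) ≤ a ^ (γ + 1) - b ^ (γ + 1) := by
  rcases hba.eq_or_lt with rfl | hlt
  · simp
  have ha : 0 < a := hb.trans_lt hlt
  have amgm : ∀ x, 0 ≤ x → x ^ γ * a ^ (1 - γ) ≤ γ * x + (1 - γ) * a := fun x hx =>
    geom_mean_le_arith_mean2_weighted hγ0 (by linarith) hx ha.le (by ring)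
  have hapow : a ^ (1 - γ) * a ^ (γ + 1) = a * a := by
    rw [← rpow_add ha, show 1 - γ + (γ + 1) = 2 by ring, rpow_two, sq]
  have hbpow : b ^ (γ + 1) = b ^ γ * b := rpow_add_one' hb (by linarith)
  refine le_of_mul_le_mul_left ?_ (rpow_pos_of_pos ha (1 - γ))
  calc a ^ (1 - γ) * ((a + b) ^ γ * (a - b))
      = ((a + b) ^ γ * a ^ (1 - γ)) * (a - b) := by ring
    _ ≤ (γ * (a + b) + (1 - γ) * a) * (a - b) :=
      mul_le_mul_of_nonneg_right (amgm _ (by linarith)) (by linarith)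
    _ = a * a - b * (γ * b + (1 - γ) * a) := by ring
    _ ≤ a * a - b * (b ^ γ * a ^ (1 - γ)) := by gcongr; exact amgm b hb
    _ = a ^ (1 - γ) * (a ^ (γ + 1) - b ^ (γ + 1)) := by rw [mul_sub, hapow, hbpow]; ring

lemma rpow_mul_mul_le_rpow_add {γ x y : ℝ} (hγ : 0 < γ) (hx : 0 ≤ x) (hy : 0 ≤ y) :
    x ^ γ * y * (γ + 1) ^ (γ + 1) ≤ γ ^ γ * (x + y) ^ (γ + 1) := by
  have hγ1 : 0 < γ + 1 := by linarith
  have amgm : (x / γ) ^ (γ / (γ + 1)) * y ^ (1 / (γ + 1)) ≤ (x + y) / (γ + 1) :=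
    (geom_mean_le_arith_mean2_weighted (by positivity) (by positivity) (by positivity) hy
      (by field_simp)).trans_eq (by field_simp)
  have := rpow_le_rpow (by positivity) amgm hγ1.le
  rw [mul_rpow (by positivity) (by positivity), ← rpow_mul (by positivity), ← rpow_mul hy,
    div_mul_cancel₀ _ hγ1.ne', one_div_mul_cancel hγ1.ne', rpow_one, div_rpow hx hγ.le,
    div_rpow (by positivity) hγ1.le, div_mul_eq_mul_div,
    div_le_div_iff₀ (by positivity) (by positivity)] at this
  linarith

lemma rpow_max_sub_le_sub_rpow_max {γ B s : ℝ} (hγ0 : 0 < γ) (hγ1 : γ ≤ 1) (hB : 0 < B) :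
    max (s - B) 0 ^ γ ≤ γ ^ γ / (B * (γ + 1) ^ (γ + 1)) *
      (max s 0 ^ (γ + 1) - max (s - 2 * B) 0 ^ (γ + 1)) := by
  rw [div_mul_eq_mul_div, le_div_iff₀ (by positivity)]
  rcases le_or_gt s B with hs | hs
  · rw [max_eq_right (by linarith), zero_rpow hγ0.ne', zero_mul]
    have := sub_nonneg.2 <| rpow_le_rpow (le_max_right _ _)
      (max_le_max (by linarith : s - 2 * B ≤ s) le_rfl) (by linarith : 0 ≤ γ + 1)
    positivity
  rw [max_eq_left (by linarith), max_eq_left (by linarith)]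
  rcases le_or_gt s (2 * B) with hs2 | hs2
  · rw [max_eq_right (by linarith), zero_rpow (by positivity), sub_zero]
    simpa [mul_assoc] using rpow_mul_mul_le_rpow_add hγ0 (by linarith : 0 ≤ s - B) hB.le
  rw [max_eq_left (by linarith)]
  have two_pow : (γ + 1) ^ (γ + 1) ≤ γ ^ γ * 2 ^ (γ + 1) := by
    simpa [one_add_one_eq_two] using rpow_mul_mul_le_rpow_add hγ0 zero_le_one zero_le_one
  have diff := add_rpow_mul_sub_le_rpow_add_one_sub hγ0.le hγ1 (by linarith : 0 ≤ s - 2 * B)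
    (by linarith : s - 2 * B ≤ s)
  rw [show s + (s - 2 * B) = 2 * (s - B) by ring, show s - (s - 2 * B) = 2 * B by ring,
    mul_rpow zero_le_two (by linarith)] at diff
  calc (s - B) ^ γ * (B * (γ + 1) ^ (γ + 1))
    _ = (s - B) ^ γ * B * (γ + 1) ^ (γ + 1) := by ring
    _ ≤ (s - B) ^ γ * B * (γ ^ γ * 2 ^ (γ + 1)) := by gcongr
    _ = γ ^ γ * (2 ^ γ * (s - B) ^ γ * (2 * B)) := by rw [rpow_add_one two_ne_zero]; ring
    _ ≤ γ ^ γ * (s ^ (γ + 1) - (s - 2 * B) ^ (γ + 1)) := by gcongr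

lemma tsum_le_of_le_sub_succ {a b : ℕ → ℝ} (ha : ∀ k, 0 ≤ a k) (hb : ∀ k, 0 ≤ b k)
    (hab : ∀ k, a k ≤ b k - b (k + 1)) : ∑' k, a k ≤ b 0 :=
  Real.tsum_le_of_sum_range_le ha fun n => calc
    ∑ k ∈ range n, a k ≤ ∑ k ∈ range n, (b k - b (k + 1)) := sum_le_sum fun k _ => hab k
    _ = b 0 - b n := sum_range_sub' b n
    _ ≤ b 0 := sub_le_self _ (hb n)

/-- for `0 < γ < 1`,
`∑_{k≥1} ((λ-(2k-1)B)_+)^γ ≤ (γ/(γ+1))^γ λ^{γ+1}/(B(γ+1))` for all `λ > 0`, with equality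
at `λ = B(γ+1)` where both sides equal `(Bγ)^γ`. -/
theorem stmt_15 (γ B : ℝ) (hγ0 : 0 < γ) (hγ1 : γ < 1) (hB : 0 < B) :
    (∀ lam : ℝ, 0 < lam →
      ∑' k : ℕ, (max (lam - (2 * (k : ℝ) + 1) * B) 0) ^ γ ≤
        (γ / (γ + 1)) ^ γ * lam ^ (γ + 1) / (B * (γ + 1))) ∧
    (∑' k : ℕ, (max (B * (γ + 1) - (2 * (k : ℝ) + 1) * B) 0) ^ γ = (B * γ) ^ γ) ∧
    ((γ / (γ + 1)) ^ γ * (B * (γ + 1)) ^ (γ + 1) / (B * (γ + 1)) = (B * γ) ^ γ) := by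
  have hγ1' : 0 < γ + 1 := by linarith
  refine ⟨fun lam hlam => ?_, ?_, ?_⟩
  · have key := tsum_le_of_le_sub_succ
      (a := fun k : ℕ => max (lam - (2 * (k : ℝ) + 1) * B) 0 ^ γ)
      (b := fun k : ℕ => γ ^ γ / (B * (γ + 1) ^ (γ + 1)) * max (lam - 2 * k * B) 0 ^ (γ + 1))
      (fun k => by positivity) (fun k => by positivity) fun k => by
        rw [← mul_sub]; push_cast
        rw [show lam - (2 * k + 1) * B = lam - 2 * k * B - B by ring,
          show lam - 2 * (k + 1) * B = lam - 2 * k * B - 2 * B by ring]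
        exact rpow_max_sub_le_sub_rpow_max hγ0 hγ1.le hB
    refine key.trans_eq ?_
    rw [Nat.cast_zero, mul_zero, zero_mul, sub_zero, max_eq_left hlam.le, div_rpow hγ0.le hγ1'.le,
      rpow_add_one hγ1'.ne']
    field_simp
  · rw [tsum_eq_single 0 fun k hk => ?_]
    · rw [Nat.cast_zero, show B * (γ + 1) - (2 * 0 + 1) * B = B * γ by ring,
        max_eq_left (by positivity)]
    · have : (1 : ℝ) ≤ k := Nat.one_le_cast.2 (Nat.one_le_iff_ne_zero.2 hk)
      rw [max_eq_right (by nlinarith), zero_rpow hγ0.ne']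
  · rw [rpow_add_one (by positivity), mul_div_assoc, mul_div_cancel_right₀ _ (by positivity),
      ← mul_rpow (by positivity) (by positivity)]
    congr 1
    field_simp
end

section
/- Let ι be a countable index set, E : ι → ℝ a family of real numbers, and let a ∈ ℝ, p ≥ 0, c ≥ 0 and γ > 1 be real numbers. Assume that for every λ ∈ ℝ one has ∑'_{j∈ι} (λ - E_j)_+ ≥ c·((λ-a)_+)^{1+p} (sums taken in [0,∞]). Then for every λ ∈ ℝ one has ∑'_{j∈ι} ((λ - E_j)_+)^γ ≥ c·(Γ(p+2)·Γ(γ+1)/Γ(γ+p+1))·((λ-a)_+)^{γ+p}. -/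
/-!
For `γ > 1` the scaled Beta integral gives
`((x)_+)^γ = Γ(γ+1)/Γ(γ-1) · ∫_0^∞ t^(γ-2) (x - t)_+ dt`,
so a Riesz mean of order `γ` is an average of Riesz means of order `1` at the shifted
energies `λ - t`. Applying the hypothesis at each `λ - t`, multiplying by `t^(γ-2)` and
integrating over `t > 0` (Tonelli for the sum over `j`) yields the claim, the right-hand side
becoming `c · B(γ-1, p+2) · ((λ-a)_+)^(γ+p)` by the same Beta integral.
-/

open MeasureTheory Set Real

lemma integral_rpow_mul_sub_rpow {s q x : ℝ} (hs : 0 < s) (hq : 0 < q) (hx : 0 < x) :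
    ∫ t in (0 : ℝ)..x, t ^ (s - 1) * (x - t) ^ (q - 1) =
      Gamma s * Gamma q / Gamma (s + q) * x ^ (s + q - 1) := by
  have hcast : ((∫ t in (0 : ℝ)..x, t ^ (s - 1) * (x - t) ^ (q - 1) : ℝ) : ℂ) =
      ∫ t in (0 : ℝ)..x, (t : ℂ) ^ ((s : ℂ) - 1) * ((x : ℂ) - t) ^ ((q : ℂ) - 1) := by
    rw [← intervalIntegral.integral_ofReal]
    refine intervalIntegral.integral_congr fun t ht => ?_
    rw [uIcc_of_le hx.le] at ht
    simp only [Complex.ofReal_mul, Complex.ofReal_cpow ht.1,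
      Complex.ofReal_cpow (sub_nonneg.mpr ht.2), Complex.ofReal_sub, Complex.ofReal_one]
  have hΓ : Complex.Gamma (s + q) ≠ 0 := by
    rw [← Complex.ofReal_add, Complex.Gamma_ofReal]
    exact_mod_cast (Gamma_pos_of_pos (by linarith)).ne'
  have hbeta :
      Complex.betaIntegral s q = Complex.Gamma s * Complex.Gamma q / Complex.Gamma (s + q) :=
    eq_div_of_mul_eq hΓ <| by
      rw [mul_comm, Complex.Gamma_mul_Gamma_eq_betaIntegral (by simpa using hs) (by simpa using hq)]
  apply Complex.ofReal_injective
  rw [hcast, Complex.betaIntegral_scaled s q hx, hbeta]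
  push_cast [Complex.ofReal_cpow hx.le, ← Complex.Gamma_ofReal]
  ring

lemma lintegral_rpow_mul_posPart_sub_rpow {s q : ℝ} (hs : 0 < s) (hq : 0 < q) (x : ℝ) :
    ∫⁻ t in Ioi 0, ENNReal.ofReal (t ^ (s - 1)) * ENNReal.ofReal (max (x - t) 0 ^ q) =
      ENNReal.ofReal (Gamma s * Gamma (q + 1) / Gamma (s + q + 1) * max x 0 ^ (s + q)) := by
  have hvanish : ∀ t ∈ Ioi x,
      ENNReal.ofReal (t ^ (s - 1)) * ENNReal.ofReal (max (x - t) 0 ^ q) = 0 := by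
    intro t ht
    rw [max_eq_right (by linarith [mem_Ioi.mp ht]), zero_rpow hq.ne', ENNReal.ofReal_zero, mul_zero]
  rcases le_or_gt x 0 with hx | hx
  · rw [setLIntegral_congr_fun measurableSet_Ioi fun t ht => hvanish t (lt_of_le_of_lt hx ht),
      lintegral_zero, max_eq_right hx, zero_rpow (by linarith), mul_zero, ENNReal.ofReal_zero]
  have hbeta := integral_rpow_mul_sub_rpow hs (by linarith : 0 < q + 1) hx
  rw [add_sub_cancel_right, ← add_assoc, add_sub_cancel_right] at hbeta
  have hpos : 0 < Gamma s * Gamma (q + 1) / Gamma (s + q + 1) * x ^ (s + q) := by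
    have := Gamma_pos_of_pos hs
    have := Gamma_pos_of_pos (by linarith : 0 < q + 1)
    have := Gamma_pos_of_pos (by linarith : 0 < s + q + 1)
    have := rpow_pos_of_pos hx (s + q)
    positivity
  -- integrability comes for free: the Beta integral is nonzero
  have hint : IntegrableOn (fun t => t ^ (s - 1) * (x - t) ^ q) (Ioc 0 x) :=
    (intervalIntegrable_iff_integrableOn_Ioc_of_le hx.le).mp
      (intervalIntegral.intervalIntegrable_of_integral_ne_zero (hbeta ▸ hpos.ne'))
  rw [← Ioc_union_Ioi_eq_Ioi hx.le, lintegral_union measurableSet_Ioi Ioc_disjoint_Ioi_same,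
    setLIntegral_congr_fun measurableSet_Ioi hvanish, lintegral_zero, add_zero,
    max_eq_left hx.le, ← hbeta, intervalIntegral.integral_of_le hx.le,
    ofReal_integral_eq_lintegral_ofReal hint]
  · refine setLIntegral_congr_fun measurableSet_Ioc fun t ht => ?_
    rw [max_eq_left (sub_nonneg.mpr ht.2), ENNReal.ofReal_mul (rpow_nonneg ht.1.le _)]
  · filter_upwards [ae_restrict_mem measurableSet_Ioc] with t ht
    exact mul_nonneg (rpow_nonneg ht.1.le _) (rpow_nonneg (sub_nonneg.mpr ht.2) _)

lemma lintegral_rpow_mul_tsum_posPart {ι : Type*} [Countable ι] (E : ι → ℝ) {s : ℝ} (hs : 0 < s)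
    (lam : ℝ) :
    ∫⁻ t in Ioi 0, ENNReal.ofReal (t ^ (s - 1)) * ∑' j, ENNReal.ofReal (max (lam - t - E j) 0) =
      ENNReal.ofReal (Gamma s / Gamma (s + 2)) *
        ∑' j, ENNReal.ofReal (max (lam - E j) 0 ^ (s + 1)) := by
  simp_rw [← ENNReal.tsum_mul_left]
  rw [lintegral_tsum fun j => by fun_prop]
  refine tsum_congr fun j => ?_
  have hj := lintegral_rpow_mul_posPart_sub_rpow hs one_pos (lam - E j)
  rw [one_add_one_eq_two, Gamma_two, mul_one, add_assoc, one_add_one_eq_two] at hj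
  simp only [rpow_one] at hj
  simp_rw [sub_right_comm lam _ (E j)]
  rw [hj, ENNReal.ofReal_mul (div_pos (Gamma_pos_of_pos hs) (Gamma_pos_of_pos (by linarith))).le]

/-- Aizenman–Lieb upgrade of lower bounds: if
`∑ (λ-E_j)_+ ≥ c ((λ-a)_+)^{1+p}` for all `λ`, then for `γ > 1`
`∑ ((λ-E_j)_+)^γ ≥ c (Γ(p+2)Γ(γ+1)/Γ(γ+p+1)) ((λ-a)_+)^{γ+p}`. -/
theorem stmt_19 {ι : Type*} [Countable ι] (E : ι → ℝ) (a p c γ : ℝ)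
    (hp : 0 ≤ p) (hc : 0 ≤ c) (hγ : 1 < γ)
    (h : ∀ lam : ℝ,
      ENNReal.ofReal (c * (max (lam - a) 0) ^ (1 + p)) ≤
        ∑' j, ENNReal.ofReal (max (lam - E j) 0)) :
    ∀ lam : ℝ,
      ENNReal.ofReal (c * (Real.Gamma (p + 2) * Real.Gamma (γ + 1) /
          Real.Gamma (γ + p + 1)) * (max (lam - a) 0) ^ (γ + p)) ≤
        ∑' j, ENNReal.ofReal ((max (lam - E j) 0) ^ γ) := by
  intro lam
  have hγ1 : 0 < γ - 1 := by linarith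
  have hD : 0 < Gamma (γ - 1) / Gamma (γ + 1) :=
    div_pos (Gamma_pos_of_pos hγ1) (Gamma_pos_of_pos (by linarith))
  have hmodel := lintegral_rpow_mul_posPart_sub_rpow hγ1 (by linarith : 0 < 1 + p) (lam - a)
  rw [show γ - 1 + (1 + p) = γ + p by ring, show 1 + p + 1 = p + 2 by ring] at hmodel
  have hsum := lintegral_rpow_mul_tsum_posPart E hγ1 lam
  rw [show γ - 1 + 2 = γ + 1 by ring, sub_add_cancel] at hsum
  refine (ENNReal.mul_le_mul_iff_right (by simpa using hD) ENNReal.ofReal_ne_top).mp ?_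
  calc ENNReal.ofReal (Gamma (γ - 1) / Gamma (γ + 1)) * ENNReal.ofReal (c * (Gamma (p + 2) *
        Gamma (γ + 1) / Gamma (γ + p + 1)) * max (lam - a) 0 ^ (γ + p))
      = ∫⁻ t in Ioi 0, ENNReal.ofReal (t ^ (γ - 1 - 1)) *
          ENNReal.ofReal (c * max (lam - t - a) 0 ^ (1 + p)) := by
        simp_rw [ENNReal.ofReal_mul hc, mul_left_comm _ (ENNReal.ofReal c), sub_right_comm lam _ a]
        rw [lintegral_const_mul' _ _ ENNReal.ofReal_ne_top, hmodel, ← ENNReal.ofReal_mul hD.le,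
          ← ENNReal.ofReal_mul hc]
        have hΓ := (Gamma_pos_of_pos (by linarith : 0 < γ + 1)).ne'
        congr 1
        field_simp
    _ ≤ ∫⁻ t in Ioi 0, ENNReal.ofReal (t ^ (γ - 1 - 1)) *
          ∑' j, ENNReal.ofReal (max (lam - t - E j) 0) :=
        setLIntegral_mono' measurableSet_Ioi fun t _ => mul_le_mul_right (h (lam - t)) _
    _ = _ := hsum
end
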